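/- Let f be a moving phantom mechanism for m = 3 projects, let V be a preference profile, and let i be a voter that is neither single-minded, double-minded, nor fully-satisfied (with respect to f and V). Then there exists a division v'_i such that ℓ(V_{-i}, v'_i) ≥ ℓ(V); moreover, whenever ℓ(V_{-i}, v'_i) = ℓ(V), the division v'_i can be taken to be single-minded, double-minded, or fully-satisfied, with f(V) = f(V_{-i}, v'_i). -/

import Mathlib

open Finset

/-- A division among `m` projects: coordinates in `[0,1]` summing to `1`. -/
def IsDivision {m : ℕ} (x : Fin m → ℝ) : Prop :=
  (∀ j, 0 ≤ x j ∧ x j ≤ 1) ∧ ∑ j, x j = 1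

/-- The ℓ1 distance between two vectors over `Fin m`. -/
noncomputable def l1 {m : ℕ} (x y : Fin m → ℝ) : ℝ := ∑ j, |x j - y j|

/-- The proportional division (coordinatewise mean) of a profile. -/
noncomputable def propDiv {n m : ℕ} (V : Fin n → Fin m → ℝ) : Fin m → ℝ :=
  fun j => (∑ i, V i j) / (n : ℝ)

/-- The `(k+1)`-th smallest element of a multiset of reals. -/
noncomputable def medianAt (s : Multiset ℝ) (k : ℕ) : ℝ :=
  (s.sort (· ≤ ·)).getD k 0

/-- Voter reports on project `j` together with the `n+1` phantom values `p 0, …, p n`. -/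
noncomputable def projValues {n m : ℕ} (V : Fin n → Fin m → ℝ)
    (p : ℕ → ℝ) (j : Fin m) : Multiset ℝ :=
  (Multiset.map (fun i => V i j) Finset.univ.val) +
    (Multiset.map p (Finset.range (n + 1)).val)

/-- The median (the `(n+1)`-th smallest of the `2n+1` values) of the `n` voter reports
on project `j` together with the `n+1` phantom values. -/
noncomputable def phantomMedian {n m : ℕ} (V : Fin n → Fin m → ℝ)
    (p : ℕ → ℝ) (j : Fin m) : ℝ :=
  medianAt (projValues V p j) n

/-- A phantom system for `n` voters: continuous, weakly increasing functions
`y k : [0,1] → [0,1]`, `k = 0, …, n`, with `y k 0 = 0`, `y k 1 = 1`,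
pointwise ordered in `k`. -/
structure PhantomSystem (n : ℕ) where
  y : ℕ → ℝ → ℝ
  contOn : ∀ k ≤ n, ContinuousOn (y k) (Set.Icc 0 1)
  monoOn : ∀ k ≤ n, MonotoneOn (y k) (Set.Icc 0 1)
  mem_Icc : ∀ k ≤ n, ∀ t ∈ Set.Icc (0:ℝ) 1, y k t ∈ Set.Icc (0:ℝ) 1
  map_zero : ∀ k ≤ n, y k 0 = 0
  map_one : ∀ k ≤ n, y k 1 = 1
  mono_idx : ∀ t ∈ Set.Icc (0:ℝ) 1, ∀ k k', k ≤ k' → k' ≤ n → y k t ≤ y k' t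

/-- `f` is the moving phantom mechanism associated with the phantom system `Y`:
on each profile of divisions, for some `t*` making the medians sum to `1`,
it outputs on each project the median of the voter reports and the phantom values. -/
def IsMovingPhantom {n m : ℕ} (f : (Fin n → Fin m → ℝ) → (Fin m → ℝ))
    (Y : PhantomSystem n) : Prop :=
  ∀ V : Fin n → Fin m → ℝ, (∀ i, IsDivision (V i)) →
    ∃ t ∈ Set.Icc (0:ℝ) 1,
      (∑ j, phantomMedian V (fun k => Y.y k t) j) = 1 ∧
      ∀ j, f V j = phantomMedian V (fun k => Y.y k t) j

/-- Truthfulness of a budget aggregation mechanism: no voter `i` with true peak `V i`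
can get an outcome closer (in ℓ1 distance) to her peak by reporting some division `v`
instead of `V i`. -/
def Truthful {n m : ℕ} (f : (Fin n → Fin m → ℝ) → (Fin m → ℝ)) : Prop :=
  ∀ V : Fin n → Fin m → ℝ, (∀ i, IsDivision (V i)) →
    ∀ i : Fin n, ∀ v : Fin m → ℝ, IsDivision v →
      l1 (f V) (V i) ≤ l1 (f (Function.update V i v)) (V i)

/-- The ℓ1-loss of mechanism `f` on profile `V`. -/
noncomputable def loss {n m : ℕ} (f : (Fin n → Fin m → ℝ) → (Fin m → ℝ))
    (V : Fin n → Fin m → ℝ) : ℝ :=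
  l1 (f V) (propDiv V)

/-- The phantom system of the Piecewise Uniform mechanism for `n` voters. -/
noncomputable def puPhantom (n : ℕ) (k : ℕ) (t : ℝ) : ℝ :=
  if t < 1 / 2 then
    (if (k : ℝ) / (n : ℝ) < 1 / 2 then 0 else 4 * t * (k : ℝ) / (n : ℝ) - 2 * t)
  else
    (if (k : ℝ) / (n : ℝ) < 1 / 2 then (k : ℝ) * (2 * t - 1) / (n : ℝ)
     else (k : ℝ) * (3 - 2 * t) / (n : ℝ) - 2 + 2 * t)

/-- `w` is an output of the Piecewise Uniform mechanism on profile `V`. -/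
def IsPUOutcome {n m : ℕ} (V : Fin n → Fin m → ℝ) (w : Fin m → ℝ) : Prop :=
  ∃ t ∈ Set.Icc (0:ℝ) 1,
    (∑ j, phantomMedian V (fun k => puPhantom n k t) j) = 1 ∧
    ∀ j, w j = phantomMedian V (fun k => puPhantom n k t) j

/-- `w` is an output of the Independent Markets mechanism (phantoms `min (k·t) 1`)
on profile `V`. -/
def IsIMOutcome {n m : ℕ} (V : Fin n → Fin m → ℝ) (w : Fin m → ℝ) : Prop :=
  ∃ t : ℝ, 0 ≤ t ∧
    (∑ j, phantomMedian V (fun k => min ((k : ℝ) * t) 1) j) = 1 ∧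
    ∀ j, w j = phantomMedian V (fun k => min ((k : ℝ) * t) 1) j

/-- A single-minded division: it assigns the whole budget to one project. -/
def SingleMindedDiv {m : ℕ} (v : Fin m → ℝ) : Prop := ∃ j, v j = 1

/-- A double-minded division relative to an outcome `w` (three projects): it agrees with
`w` on one project `j`, proposes `1 - w j` on another project, and `0` on the third. -/
def DoubleMindedDiv (w v : Fin 3 → ℝ) : Prop :=
  ∃ j j' : Fin 3, j ≠ j' ∧ v j = w j ∧ v j' = 1 - w j ∧
    ∀ k, k ≠ j → k ≠ j' → v k = 0

/-- A three-type profile for mechanism `f`: each voter is fully-satisfied,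
double-minded, or single-minded. -/
def ThreeTypeProfile {n : ℕ} (f : (Fin n → Fin 3 → ℝ) → (Fin 3 → ℝ))
    (V : Fin n → Fin 3 → ℝ) : Prop :=
  ∀ i, V i = f V ∨ DoubleMindedDiv (f V) (V i) ∨ SingleMindedDiv (V i)

/-- The single-minded division fully supporting project `j`. -/
noncomputable def singleDiv (j : Fin 3) : Fin 3 → ℝ :=
  fun j' => if j' = j then 1 else 0

/-- The double-minded division proposing `x k` on project `k`, `1 - x k` on
project `j` and `0` on the remaining project. -/
noncomputable def doubleDiv (x : Fin 3 → ℝ) (k j : Fin 3) : Fin 3 → ℝ :=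
  fun j' => if j' = k then x k else if j' = j then 1 - x k else 0

/-- A utilitarian mechanism: it always returns a division minimizing the total
ℓ1 distance (social cost) to the voters' proposals. -/
def Utilitarian {n m : ℕ} (f : (Fin n → Fin m → ℝ) → (Fin m → ℝ)) : Prop :=
  ∀ V : Fin n → Fin m → ℝ, (∀ i, IsDivision (V i)) →
    IsDivision (f V) ∧
    ∀ x : Fin m → ℝ, IsDivision x → (∑ i, l1 (V i) (f V)) ≤ ∑ i, l1 (V i) x

/-!
Fix the outcome `w = f V`. If voter `i` switches to a division `u` lying weakly on the same side
of `w` as `V i` in every coordinate, no median at the current `t*` moves; as the medians are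
monotone in `t` and must sum to `1`, the outcome stays `w`. For a fixed outcome the loss is a
convex function of the report (the ℓ1 distance from `w` to an affine function of it). On three
projects the divisions on the same side of `w` as `V i` form a polytope whose vertices are `w` and
single- or double-minded divisions. `V i` lies in their convex hull, so by the maximum principle
some vertex has loss at least `ℓ(V)`, and switching to it leaves the outcome unchanged.
-/

theorem List.Pairwise.pred_iff_length_lt_countP {α : Type*} [LE α] {t d : List α} {a : α}
    (h : (t ++ a :: d).Pairwise (· ≤ ·)) {P : α → Prop} [DecidablePred P]
    (hP : ∀ x y, x ≤ y → P y → P x) :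
    P a ↔ t.length < (t ++ a :: d).countP (P ·) := by
  rw [List.pairwise_append, List.pairwise_cons] at h
  obtain ⟨-, ⟨had, -⟩, hta⟩ := h
  rw [List.countP_append, List.countP_cons]
  constructor
  · intro ha
    have : t.countP (P ·) = t.length :=
      List.countP_eq_length.2 fun x hx => by simpa using hP x a (hta x hx a (by simp)) ha
    simp [ha, this]
  · intro hlt
    by_contra ha
    have : d.countP (P ·) = 0 :=
      List.countP_eq_zero.2 fun x hx hPx => ha (hP a x (had x hx) (by simpa using hPx))
    have := List.countP_le_length (l := t) (p := (P ·))
    simp [ha] at hlt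
    omega

theorem medianAt_pred_iff {s : Multiset ℝ} {k : ℕ} (hk : k < Multiset.card s)
    {P : ℝ → Prop} [DecidablePred P] (hP : ∀ x y, x ≤ y → P y → P x) :
    P (medianAt s k) ↔ k < s.countP P := by
  set l := s.sort (· ≤ ·)
  have hlen : k < l.length := by rwa [Multiset.length_sort]
  have hsplit : l = l.take k ++ l[k] :: l.drop (k + 1) := by
    rw [List.getElem_cons_drop, List.take_append_drop]
  have hsorted : l.Pairwise (· ≤ ·) := Multiset.pairwise_sort _ _
  rw [hsplit] at hsorted
  have := hsorted.pred_iff_length_lt_countP hP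
  rwa [← hsplit, List.length_take_of_le hlen.le, ← Multiset.coe_countP, Multiset.sort_eq,
    ← List.getD_eq_getElem _ 0 hlen] at this

theorem medianAt_le_iff {s : Multiset ℝ} {k : ℕ} (hk : k < Multiset.card s) (c : ℝ) :
    medianAt s k ≤ c ↔ k < s.countP (· ≤ c) :=
  medianAt_pred_iff hk fun _ _ hxy hy => hxy.trans hy

theorem medianAt_lt_iff {s : Multiset ℝ} {k : ℕ} (hk : k < Multiset.card s) (c : ℝ) :
    medianAt s k < c ↔ k < s.countP (· < c) :=
  medianAt_pred_iff hk fun _ _ hxy hy => hxy.trans_lt hy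

theorem medianAt_eq_iff {s : Multiset ℝ} {k : ℕ} (hk : k < Multiset.card s) (c : ℝ) :
    medianAt s k = c ↔ k < s.countP (· ≤ c) ∧ s.countP (· < c) ≤ k := by
  rw [le_antisymm_iff, medianAt_le_iff hk, ← not_lt, medianAt_lt_iff hk, not_lt]

theorem medianAt_mem {s : Multiset ℝ} {k : ℕ} (hk : k < Multiset.card s) : medianAt s k ∈ s := by
  rw [medianAt, List.getD_eq_getElem _ 0 (by rwa [Multiset.length_sort])]
  exact (Multiset.mem_sort _).1 (List.getElem_mem _)

theorem medianAt_cons_eq {r : Multiset ℝ} {x x' M : ℝ} {k : ℕ} (hk : k ≤ Multiset.card r)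
    (hM : medianAt (x ::ₘ r) k = M) (hx' : (M ≤ x → M ≤ x') ∧ (x ≤ M → x' ≤ M)) :
    medianAt (x' ::ₘ r) k = M := by
  have hk' : ∀ y, k < Multiset.card (y ::ₘ r) := fun y => by
    rw [Multiset.card_cons]; omega
  rw [medianAt_eq_iff (hk' x)] at hM
  rw [medianAt_eq_iff (hk' x')]
  simp only [Multiset.countP_cons] at hM ⊢
  rcases lt_trichotomy x M with hxM | rfl | hMx
  · have hx'M := hx'.2 hxM.le
    simp only [hxM.le, hxM, hx'M, if_true] at hM ⊢
    split_ifs <;> omega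
  · obtain rfl : x' = x := le_antisymm (hx'.2 le_rfl) (hx'.1 le_rfl)
    exact hM
  · have hMx' := hx'.1 hMx.le
    simp only [not_le.2 hMx, not_lt.2 hMx.le, not_lt.2 hMx', if_false] at hM ⊢
    split_ifs <;> omega

theorem card_projValues {n m : ℕ} (V : Fin n → Fin m → ℝ) (p : ℕ → ℝ) (j : Fin m) :
    Multiset.card (projValues V p j) = 2 * n + 1 := by
  simp [projValues]
  omega

theorem projValues_update {n m : ℕ} (V : Fin n → Fin m → ℝ) (i : Fin n) (v : Fin m → ℝ)
    (p : ℕ → ℝ) (j : Fin m) :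
    ∃ r, projValues V p j = V i j ::ₘ r ∧
      projValues (Function.update V i v) p j = v j ::ₘ r := by
  set rest := (univ : Finset (Fin n)).val.erase i
  have hsplit : (univ : Finset (Fin n)).val = i ::ₘ rest :=
    (Multiset.cons_erase (mem_univ_val i)).symm
  refine ⟨rest.map (fun k => V k j) + (range (n + 1)).val.map p,
    by rw [projValues, hsplit, Multiset.map_cons, Multiset.cons_add], ?_⟩
  rw [projValues, hsplit, Multiset.map_cons, Multiset.cons_add, Function.update_self]
  congr 2
  refine Multiset.map_congr rfl fun k hk => ?_
  rw [Function.update_of_ne (univ.nodup.mem_erase_iff.1 hk).1]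

def SameSide {m : ℕ} (w v u : Fin m → ℝ) : Prop :=
  ∀ j, (w j ≤ v j → w j ≤ u j) ∧ (v j ≤ w j → u j ≤ w j)

section PhantomMedian

variable {n m : ℕ}

theorem phantomMedian_update_of_sameSide (V : Fin n → Fin m → ℝ) (i : Fin n) {u : Fin m → ℝ}
    (p : ℕ → ℝ) (hu : SameSide (phantomMedian V p) (V i) u) :
    phantomMedian (Function.update V i u) p = phantomMedian V p := by
  funext j
  obtain ⟨r, hV, hW⟩ := projValues_update V i u p j
  have hcard : n ≤ Multiset.card r := by
    have := card_projValues V p j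
    rw [hV, Multiset.card_cons] at this
    omega
  rw [phantomMedian, hW]
  exact medianAt_cons_eq hcard (by rw [← hV]; rfl) (hu j)

theorem phantomMedian_mono (V : Fin n → Fin m → ℝ) {p p' : ℕ → ℝ}
    (h : ∀ k ≤ n, p k ≤ p' k) (j : Fin m) :
    phantomMedian V p j ≤ phantomMedian V p' j := by
  have hk : ∀ q, n < Multiset.card (projValues V q j) := fun q => by
    rw [card_projValues]; omega
  rw [phantomMedian, medianAt_le_iff (hk p)]
  refine ((medianAt_le_iff (hk p') _).1 le_rfl).trans_le ?_
  rw [projValues, projValues, Multiset.countP_add, Multiset.countP_add]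
  refine Nat.add_le_add_left ?_ _
  rw [Multiset.countP_map, Multiset.countP_map, ← Finset.filter_val, ← Finset.filter_val,
    Finset.card_val, Finset.card_val]
  exact Finset.card_le_card fun k hk => by
    simp only [Finset.mem_filter, Finset.mem_range] at hk ⊢
    exact ⟨hk.1, (h k (by omega)).trans hk.2⟩

end PhantomMedian

namespace PhantomSystem

variable {n m : ℕ} (Y : PhantomSystem n) {V : Fin n → Fin m → ℝ}

theorem phantomMedian_mem_Icc (hV : ∀ i, IsDivision (V i)) {t : ℝ} (ht : t ∈ Set.Icc (0 : ℝ) 1)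
    (j : Fin m) : phantomMedian V (fun k => Y.y k t) j ∈ Set.Icc (0 : ℝ) 1 := by
  have hmem := medianAt_mem (s := projValues V (fun k => Y.y k t) j) (k := n)
    (by rw [card_projValues]; omega)
  rw [projValues, Multiset.mem_add, Multiset.mem_map, Multiset.mem_map] at hmem
  rcases hmem with ⟨i, -, hi⟩ | ⟨k, hk, hk'⟩
  · rw [phantomMedian, projValues, ← hi]
    exact (hV i).1 j
  · rw [phantomMedian, projValues, ← hk']
    exact Y.mem_Icc k (Nat.lt_succ_iff.1 (Finset.mem_range.1 hk)) t ht

theorem phantomMedian_eq_of_sum_eq (V : Fin n → Fin m → ℝ) {t t' : ℝ}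
    (ht : t ∈ Set.Icc (0 : ℝ) 1) (ht' : t' ∈ Set.Icc (0 : ℝ) 1)
    (h : ∑ j, phantomMedian V (fun k => Y.y k t) j = ∑ j, phantomMedian V (fun k => Y.y k t') j) :
    phantomMedian V (fun k => Y.y k t) = phantomMedian V (fun k => Y.y k t') := by
  wlog htt' : t ≤ t' generalizing t t'
  · exact (this ht' ht h.symm (le_of_not_ge htt')).symm
  have hmono (j : Fin m) := phantomMedian_mono V (fun k hk => Y.monoOn k hk ht ht' htt') j
  funext j
  exact (Finset.sum_eq_sum_iff_of_le fun j _ => hmono j).1 h j (mem_univ j)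

end PhantomSystem

namespace IsMovingPhantom

variable {n m : ℕ} {f : (Fin n → Fin m → ℝ) → (Fin m → ℝ)} {Y : PhantomSystem n}
  {V : Fin n → Fin m → ℝ}

theorem isDivision (hf : IsMovingPhantom f Y) (hV : ∀ i, IsDivision (V i)) :
    IsDivision (f V) := by
  obtain ⟨t, ht, hsum, hfV⟩ := hf V hV
  refine ⟨fun j => hfV j ▸ Y.phantomMedian_mem_Icc hV ht j, ?_⟩
  simpa only [hfV] using hsum

theorem apply_update_eq (hf : IsMovingPhantom f Y) (hV : ∀ i, IsDivision (V i)) (i : Fin n)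
    {u : Fin m → ℝ} (hu : IsDivision u) (hside : SameSide (f V) (V i) u) :
    f (Function.update V i u) = f V := by
  obtain ⟨t, ht, hsum, hfV⟩ := hf V hV
  have hfV' : f V = phantomMedian V (fun k => Y.y k t) := funext hfV
  obtain ⟨t', ht', hsum', hfW⟩ := hf _ <|
    (Function.forall_update_iff V (p := fun _ v => IsDivision v)).2 ⟨hu, fun k _ => hV k⟩
  have hsame := phantomMedian_update_of_sameSide V i _ (hfV' ▸ hside)
  rw [funext hfW, ← Y.phantomMedian_eq_of_sum_eq _ ht ht' (by rw [hsame, hsum, hsum']), hsame,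
    hfV']

end IsMovingPhantom

theorem propDiv_update {n m : ℕ} (V : Fin n → Fin m → ℝ) (i : Fin n) (v : Fin m → ℝ) :
    propDiv (Function.update V i v) = propDiv V + (n : ℝ)⁻¹ • (v - V i) := by
  funext j
  simp only [propDiv, Pi.add_apply, Pi.smul_apply, Pi.sub_apply, smul_eq_mul]
  rw [← add_sum_erase _ _ (mem_univ i), ← add_sum_erase _ (fun k => V k j) (mem_univ i),
    Function.update_self,
    sum_congr rfl fun k hk => by rw [Function.update_of_ne (ne_of_mem_erase hk)]]
  ring

theorem convexOn_l1 {m : ℕ} (w : Fin m → ℝ) : ConvexOn ℝ Set.univ (l1 w) := by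
  refine ⟨convex_univ, fun x _ y _ a b ha hb hab => ?_⟩
  simp only [l1, smul_eq_mul, mul_sum, ← sum_add_distrib]
  refine sum_le_sum fun j _ => ?_
  calc |w j - (a • x + b • y) j| = |a * (w j - x j) + b * (w j - y j)| := by
        congr 1
        simp only [Pi.add_apply, Pi.smul_apply, smul_eq_mul]
        linear_combination (-w j) * hab
    _ ≤ a * |w j - x j| + b * |w j - y j| := by
        refine (abs_add_le _ _).trans_eq ?_
        rw [abs_mul, abs_mul, abs_of_nonneg ha, abs_of_nonneg hb]

theorem convexOn_l1_propDiv_update {n m : ℕ} (w : Fin m → ℝ) (V : Fin n → Fin m → ℝ)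
    (i : Fin n) : ConvexOn ℝ Set.univ fun v => l1 w (propDiv (Function.update V i v)) := by
  refine ⟨convex_univ, fun x _ y _ a b ha hb hab => ?_⟩
  have hlin : propDiv (Function.update V i (a • x + b • y)) =
      a • propDiv (Function.update V i x) + b • propDiv (Function.update V i y) := by
    funext j
    simp only [propDiv_update, Pi.add_apply, Pi.smul_apply, Pi.sub_apply, smul_eq_mul]
    linear_combination ((n : ℝ)⁻¹ * V i j - propDiv V j) * hab
  simp only [hlin]
  exact (convexOn_l1 w).2 trivial trivial ha hb hab

theorem sum_smul_mem_convexHull {𝕜 E ι : Type*} [Field 𝕜] [LinearOrder 𝕜] [IsStrictOrderedRing 𝕜]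
    [AddCommGroup E] [Module 𝕜 E] [Fintype ι] {s : Set E} {c : ι → 𝕜} {z : ι → E}
    (h₀ : ∀ i, 0 ≤ c i) (h₁ : ∑ i, c i = 1) (hz : ∀ i, c i ≠ 0 → z i ∈ s) :
    ∑ i, c i • z i ∈ convexHull 𝕜 s := by
  simpa only [finsum_eq_sum_of_fintype] using (convex_convexHull 𝕜 s).finsum_mem h₀
    (by rwa [finsum_eq_sum_of_fintype]) fun i hi => subset_convexHull 𝕜 s (hz i hi)

theorem exists_eq_mul_of_le {𝕜 : Type*} [Field 𝕜] [LinearOrder 𝕜] [IsStrictOrderedRing 𝕜]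
    {x y : 𝕜} (hx : 0 ≤ x) (hxy : x ≤ y) :
    ∃ r, 0 ≤ r ∧ r ≤ 1 ∧ x = r * y ∧ (r ≠ 1 → x < y) := by
  rcases hxy.lt_or_eq with hlt | rfl
  · have hy : 0 < y := hx.trans_lt hlt
    exact ⟨x / y, div_nonneg hx hy.le, div_le_one_of_le₀ hxy hy.le,
      (div_mul_cancel₀ x hy.ne').symm, fun _ => hlt⟩
  · exact ⟨1, zero_le_one, le_rfl, (one_mul x).symm, fun h => absurd rfl h⟩

theorem Fin.eq_or_eq_or_eq_of_ne {a b c : Fin 3} (hab : a ≠ b) (hac : a ≠ c) (hbc : b ≠ c)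
    (j : Fin 3) : j = a ∨ j = b ∨ j = c := by
  revert a b c j
  decide

theorem Fin.exists_ne_ne (a b : Fin 3) : ∃ c, a ≠ c ∧ b ≠ c := by
  revert a b
  decide

theorem Fin.sum_univ_three_of_ne {M : Type*} [AddCommMonoid M] {a b c : Fin 3} (hab : a ≠ b)
    (hac : a ≠ c) (hbc : b ≠ c) (g : Fin 3 → M) : ∑ j, g j = g a + g b + g c := by
  have huniv : (univ : Finset (Fin 3)) = {a, b, c} := by
    ext j
    simpa using Fin.eq_or_eq_or_eq_of_ne hab hac hbc j
  rw [huniv, sum_insert (by simp [hab, hac]), sum_pair hbc, add_assoc]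

theorem isDivision_singleDiv (j : Fin 3) : IsDivision (singleDiv j) := by
  refine ⟨fun k => ?_, ?_⟩
  · unfold singleDiv
    split_ifs <;> norm_num
  · simp [singleDiv]

theorem singleMindedDiv_singleDiv (j : Fin 3) : SingleMindedDiv (singleDiv j) :=
  ⟨j, if_pos rfl⟩

theorem isDivision_doubleDiv {w : Fin 3 → ℝ} (hw : IsDivision w) {a b : Fin 3} (hab : a ≠ b) :
    IsDivision (doubleDiv w a b) := by
  obtain ⟨c, hac, hbc⟩ := Fin.exists_ne_ne a b
  refine ⟨fun j => ?_, ?_⟩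
  · have := hw.1 a
    unfold doubleDiv
    split_ifs <;> constructor <;> linarith
  · rw [Fin.sum_univ_three_of_ne hab hac hbc]
    simp [doubleDiv, hab.symm, hac.symm, hbc.symm]

theorem doubleMindedDiv_doubleDiv (w : Fin 3 → ℝ) {a b : Fin 3} (hab : a ≠ b) :
    DoubleMindedDiv w (doubleDiv w a b) :=
  ⟨a, b, hab, if_pos rfl, by simp [doubleDiv, hab.symm],
    fun k hka hkb => by simp [doubleDiv, hka, hkb]⟩

/-- The vertices of the polytope of divisions on the same side of `w` as `v`. -/
def extremeReports (w v : Fin 3 → ℝ) : Set (Fin 3 → ℝ) :=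
  {u | IsDivision u ∧ SameSide w v u ∧ (SingleMindedDiv u ∨ DoubleMindedDiv w u ∨ u = w)}

theorem self_mem_extremeReports {w : Fin 3 → ℝ} (hw : IsDivision w) (v : Fin 3 → ℝ) :
    w ∈ extremeReports w v :=
  ⟨hw, fun _ => ⟨fun _ => le_rfl, fun _ => le_rfl⟩, Or.inr (Or.inr rfl)⟩

theorem singleDiv_mem_extremeReports {w v : Fin 3 → ℝ} (hw : IsDivision w) {p : Fin 3}
    (hp : w p < v p) (hlt : ∀ j ≠ p, v j < w j) : singleDiv p ∈ extremeReports w v := by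
  refine ⟨isDivision_singleDiv p, fun j => ?_, Or.inl (singleMindedDiv_singleDiv p)⟩
  rcases eq_or_ne j p with rfl | hj
  · simp only [singleDiv]
    exact ⟨fun _ => (hw.1 j).2, fun h => absurd h (not_le.2 hp)⟩
  · simp only [singleDiv, if_neg hj]
    exact ⟨fun h => absurd h (not_le.2 (hlt j hj)), fun _ => (hw.1 j).1⟩

theorem doubleDiv_mem_extremeReports {w v : Fin 3 → ℝ} (hw : IsDivision w) {a b c : Fin 3}
    (hab : a ≠ b) (hac : a ≠ c) (hbc : b ≠ c) (hb : w b < v b) (hc : v c < w c) :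
    doubleDiv w a b ∈ extremeReports w v := by
  refine ⟨isDivision_doubleDiv hw hab, fun j => ?_,
    Or.inr (Or.inl (doubleMindedDiv_doubleDiv w hab))⟩
  have hsum := (Fin.sum_univ_three_of_ne hab hac hbc w).symm.trans hw.2
  have := (hw.1 c).1
  rcases Fin.eq_or_eq_or_eq_of_ne hab hac hbc j with rfl | rfl | rfl <;>
    simp only [doubleDiv, if_pos, if_neg, hab.symm, hac.symm, hbc.symm, not_false_eq_true] <;>
    constructor <;> intro <;> linarith

theorem mem_convexHull_extremeReports_of_two_le {w v : Fin 3 → ℝ} (hw : IsDivision w)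
    (hv : IsDivision v) {p a b : Fin 3} (hpa : p ≠ a) (hpb : p ≠ b) (hab : a ≠ b)
    (ha : v a ≤ w a) (hb : v b ≤ w b) : v ∈ convexHull ℝ (extremeReports w v) := by
  have hwsum := (Fin.sum_univ_three_of_ne hpa hpb hab w).symm.trans hw.2
  have hvsum := (Fin.sum_univ_three_of_ne hpa hpb hab v).symm.trans hv.2
  obtain ⟨r, hr0, hr1, hvr, hra⟩ := exists_eq_mul_of_le (hv.1 a).1 ha
  obtain ⟨s, hs0, hs1, hvs, hsb⟩ := exists_eq_mul_of_le (hv.1 b).1 hb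
  -- `v` keeps the fractions `r` of `w a` and `s` of `w b`: it is the bilinear interpolation of
  -- the four vertices obtained by keeping all or nothing of each.
  set c : Fin 4 → ℝ := ![r * s, r * (1 - s), (1 - r) * s, (1 - r) * (1 - s)] with hc
  set z : Fin 4 → Fin 3 → ℝ := ![w, doubleDiv w a p, doubleDiv w b p, singleDiv p] with hz
  have hcomb : ∑ k, c k • z k = v := by
    funext j
    simp only [hc, hz, Fin.sum_univ_four, Finset.sum_apply, Pi.smul_apply,
      smul_eq_mul, Matrix.cons_val]
    rcases Fin.eq_or_eq_or_eq_of_ne hpa hpb hab j with h | h | h <;> rw [h] <;>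
      simp only [doubleDiv, singleDiv, if_pos, if_neg, hpa, hpb, hab, hpa.symm, hpb.symm,
        hab.symm, not_false_eq_true]
    · linear_combination -hvsum + hvr + hvs + r * s * hwsum
    · linear_combination -hvr
    · linear_combination -hvs
  suffices h : ∑ k, c k • z k ∈ convexHull ℝ (extremeReports w v) by rwa [hcomb] at h
  refine sum_smul_mem_convexHull (fun k => by fin_cases k <;> simp [hc] <;> positivity)
    (by simp [hc, Fin.sum_univ_four]; ring) fun k hk => ?_
  fin_cases k
  · exact self_mem_extremeReports hw _
  · have hb' := hsb (by rintro rfl; simp [hc] at hk)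
    exact doubleDiv_mem_extremeReports hw hpa.symm hab hpb (by linarith) hb'
  · have ha' := hra (by rintro rfl; simp [hc] at hk)
    exact doubleDiv_mem_extremeReports hw hpb.symm hab.symm hpa (by linarith) ha'
  · have ha' := hra (by rintro rfl; simp [hc] at hk)
    have hb' := hsb (by rintro rfl; simp [hc] at hk)
    refine singleDiv_mem_extremeReports hw (by linarith) fun j hj => ?_
    rcases Fin.eq_or_eq_or_eq_of_ne hpa hpb hab j with rfl | rfl | rfl
    exacts [absurd rfl hj, ha', hb']

theorem mem_convexHull_extremeReports_of_lt {w v : Fin 3 → ℝ} (hw : IsDivision w)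
    (hv : IsDivision v) {q a b : Fin 3} (hqa : q ≠ a) (hqb : q ≠ b) (hab : a ≠ b)
    (hq : v q < w q) (ha : w a ≤ v a) (hb : w b ≤ v b) :
    v ∈ convexHull ℝ (extremeReports w v) := by
  have hwsum := (Fin.sum_univ_three_of_ne hqa hqb hab w).symm.trans hw.2
  have hvsum := (Fin.sum_univ_three_of_ne hqa hqb hab v).symm.trans hv.2
  have hwq : 0 < w q := (hv.1 q).1.trans_lt hq
  -- barycentric coordinates of `v` in the triangle `w`, `doubleDiv w a b`, `doubleDiv w b a`
  set c : Fin 3 → ℝ := ![v q / w q, (v b - w b) / w q, (v a - w a) / w q] with hc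
  set z : Fin 3 → Fin 3 → ℝ := ![w, doubleDiv w a b, doubleDiv w b a] with hz
  have hcomb : ∑ k, c k • z k = v := by
    funext j
    simp only [hc, hz, Fin.sum_univ_three, Finset.sum_apply, Pi.smul_apply, smul_eq_mul,
      Matrix.cons_val]
    rcases Fin.eq_or_eq_or_eq_of_ne hqa hqb hab j with h | h | h <;> rw [h] <;>
      simp only [doubleDiv, if_pos, if_neg, hqa, hqb, hab, hab.symm, not_false_eq_true] <;>
      field_simp
    · ring
    · linear_combination w a * hvsum - v a * hwsum
    · linear_combination w b * hvsum - v b * hwsum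
  suffices h : ∑ k, c k • z k ∈ convexHull ℝ (extremeReports w v) by rwa [hcomb] at h
  refine sum_smul_mem_convexHull (fun k => ?_) ?_ fun k hk => ?_
  · have := (hv.1 q).1
    fin_cases k <;> simp only [hc] <;> apply div_nonneg <;> linarith
  · simp only [hc, Fin.sum_univ_three, Matrix.cons_val]
    field_simp
    linarith
  fin_cases k
  · exact self_mem_extremeReports hw _
  · refine doubleDiv_mem_extremeReports hw hab hqa.symm hqb.symm (hb.lt_of_ne ?_) hq
    rintro h
    simp [hc, h] at hk
  · refine doubleDiv_mem_extremeReports hw hab.symm hqb.symm hqa.symm (ha.lt_of_ne ?_) hq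
    rintro h
    simp [hc, h] at hk

theorem mem_convexHull_extremeReports {w v : Fin 3 → ℝ} (hw : IsDivision w)
    (hv : IsDivision v) : v ∈ convexHull ℝ (extremeReports w v) := by
  by_cases hle : ∃ p, ∀ j ≠ p, v j ≤ w j
  · obtain ⟨p, hp⟩ := hle
    obtain ⟨a, hpa, -⟩ := Fin.exists_ne_ne p p
    obtain ⟨b, hpb, hab⟩ := Fin.exists_ne_ne p a
    exact mem_convexHull_extremeReports_of_two_le hw hv hpa hpb hab (hp a hpa.symm)
      (hp b hpb.symm)
  · push Not at hle
    obtain ⟨a, -, ha⟩ := hle 0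
    obtain ⟨b, hba, hb⟩ := hle a
    obtain ⟨q, haq, hbq⟩ := Fin.exists_ne_ne a b
    have hwsum := (Fin.sum_univ_three_of_ne haq.symm hbq.symm hba.symm w).symm.trans hw.2
    have hvsum := (Fin.sum_univ_three_of_ne haq.symm hbq.symm hba.symm v).symm.trans hv.2
    exact mem_convexHull_extremeReports_of_lt hw hv haq.symm hbq.symm hba.symm (by linarith)
      ha.le hb.le

theorem worst_case_helper_general {n : ℕ}
    (f : (Fin n → Fin 3 → ℝ) → (Fin 3 → ℝ)) (Y : PhantomSystem n)
    (hf : IsMovingPhantom f Y)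
    (V : Fin n → Fin 3 → ℝ) (hV : ∀ i, IsDivision (V i))
    (i : Fin n) :
    ∃ v' : Fin 3 → ℝ, IsDivision v' ∧
      loss f V ≤ loss f (Function.update V i v') ∧
      (loss f (Function.update V i v') = loss f V →
        (SingleMindedDiv v' ∨ DoubleMindedDiv (f V) v' ∨ v' = f V) ∧
        f (Function.update V i v') = f V) := by
  obtain ⟨v', ⟨hv', hside, htype⟩, hloss⟩ :=
    (convexOn_l1_propDiv_update (f V) V i).exists_ge_of_mem_convexHull (Set.subset_univ _)
      (mem_convexHull_extremeReports (hf.isDivision hV) (hV i))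
  have hout := hf.apply_update_eq hV i hv' hside
  refine ⟨v', hv', ?_, fun _ => ⟨htype, hout⟩⟩
  simpa only [loss, hout, Function.update_eq_self] using hloss

/-- Let `f` be a moving phantom mechanism for `m = 3`, `V` a profile, and
`i` a voter that is neither single-minded, double-minded nor fully-satisfied. Then
there is a division `v'` with `ℓ(V₋ᵢ, v') ≥ ℓ(V)`; moreover whenever equality holds,
`v'` is single-minded, double-minded or fully-satisfied and the outcome is unchanged. -/
theorem worst_case_helper {n : ℕ} (hn : 1 ≤ n)
    (f : (Fin n → Fin 3 → ℝ) → (Fin 3 → ℝ)) (Y : PhantomSystem n)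
    (hf : IsMovingPhantom f Y)
    (V : Fin n → Fin 3 → ℝ) (hV : ∀ i, IsDivision (V i))
    (i : Fin n)
    (hns : ¬ SingleMindedDiv (V i))
    (hnd : ¬ DoubleMindedDiv (f V) (V i))
    (hnf : V i ≠ f V) :
    ∃ v' : Fin 3 → ℝ, IsDivision v' ∧
      loss f V ≤ loss f (Function.update V i v') ∧
      (loss f (Function.update V i v') = loss f V →
        (SingleMindedDiv v' ∨ DoubleMindedDiv (f V) v' ∨ v' = f V) ∧
        f (Function.update V i v') = f V) :=
  worst_case_helper_general f Y hf V hV i
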